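/- arXiv:1110.1556 — 8 statements merged into one kernel-verified Lean document; each statement's English description precedes it below -/
import Mathlib

section
/- For every real number x with 0 < x ≤ 1, the inequality x·(8·√(1−x) + √(1+x)) ≤ 11·√(1+x) − 16·√(1−x) holds if and only if 3/5 ≤ x ≤ 1. -/
theorem stmt_0 (x : ℝ) (hx0 : 0 < x) (hx1 : x ≤ 1) :
    x * (8 * Real.sqrt (1 - x) + Real.sqrt (1 + x)) ≤
      11 * Real.sqrt (1 + x) - 16 * Real.sqrt (1 - x) ↔
    3 / 5 ≤ x ∧ x ≤ 1 := by
  set a := Real.sqrt (1 - x) with ha_def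
  set b := Real.sqrt (1 + x) with hb_def
  have ha0 : 0 ≤ a := Real.sqrt_nonneg _
  have hb0 : 0 ≤ b := Real.sqrt_nonneg _
  have ha2 : a ^ 2 = 1 - x := Real.sq_sqrt (by linarith)
  have hb2 : b ^ 2 = 1 + x := Real.sq_sqrt (by linarith)
  have hbpos : 0 < b := Real.sqrt_pos.mpr (by linarith)
  constructor
  · intro h
    refine ⟨?_, hx1⟩
    have h1 : (8 * x + 16) * a ≤ (11 - x) * b := by nlinarith
    have h2 : ((8 * x + 16) * a) ^ 2 ≤ ((11 - x) * b) ^ 2 := by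
      apply pow_le_pow_left₀ (by positivity) h1
    have h3 : (8 * x + 16) ^ 2 * (1 - x) ≤ (11 - x) ^ 2 * (1 + x) := by
      nlinarith [h2]
    nlinarith [sq_nonneg x, sq_nonneg (x - 1), sq_nonneg (x + 1)]
  · rintro ⟨h35, -⟩
    have hpoly : (8 * x + 16) ^ 2 * (1 - x) ≤ (11 - x) ^ 2 * (1 + x) := by
      nlinarith [sq_nonneg x, sq_nonneg (5 * x - 3)]
    have hsum : 0 < (11 - x) * b + (8 * x + 16) * a := by
      have h4 : 0 < (11 - x) * b := mul_pos (by linarith) hbpos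
      nlinarith [mul_nonneg (show (0:ℝ) ≤ 8 * x + 16 by linarith) ha0]
    have h1 : (8 * x + 16) * a ≤ (11 - x) * b := by
      nlinarith [mul_pos hsum hsum, sq_nonneg ((11 - x) * b - (8 * x + 16) * a)]
    nlinarith
end

section
/- A real number y satisfies 2·c(2y−1) = y³ + 1, where c : ℝ → ℝ is the real cube root function (the unique real t with t³ = 2y−1), if and only if y = 1, y = (−1+√5)/2, or y = (−1−√5)/2. -/
lemma cube_inj' {a b : ℝ} (h : a ^ 3 = b ^ 3) : a = b := by
  have := (Odd.strictMono_pow (R := ℝ) (⟨1, rfl⟩ : Odd 3)).injective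
  exact this h

theorem stmt_3 (c : ℝ → ℝ) (hc : ∀ s : ℝ, (c s) ^ 3 = s) (y : ℝ) :
    2 * c (2 * y - 1) = y ^ 3 + 1 ↔
      y = 1 ∨ y = (-1 + Real.sqrt 5) / 2 ∨ y = (-1 - Real.sqrt 5) / 2 := by
  have h5 : Real.sqrt 5 ^ 2 = 5 := Real.sq_sqrt (by norm_num)
  constructor
  · intro h
    have hcv : c (2 * y - 1) = (y ^ 3 + 1) / 2 := by linarith
    have hkey : ((y ^ 3 + 1) / 2) ^ 3 = 2 * y - 1 := by
      rw [← hcv]; exact hc _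
    have hQ : y ^ 6 + 2 * y ^ 4 + 2 * y ^ 3 + 4 * y ^ 2 + 2 * y + 9 > 0 := by
      nlinarith [sq_nonneg (y ^ 3 + y), sq_nonneg (y ^ 2 + y), sq_nonneg (y + 1/2)]
    have hfac : (y - 1) * (y ^ 2 + y - 1) = 0 := by
      have h9 : (y ^ 3 - 2 * y + 1) *
          (y ^ 6 + 2 * y ^ 4 + 2 * y ^ 3 + 4 * y ^ 2 + 2 * y + 9) = 0 := by
        nlinarith [hkey]
      have := mul_eq_zero.mp h9
      rcases this with h' | h'
      · linear_combination h'
      · exact absurd h' (ne_of_gt hQ)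
    rcases mul_eq_zero.mp hfac with h1 | h2
    · left; linarith
    · right
      have hfac2 : (2 * y + 1 - Real.sqrt 5) * (2 * y + 1 + Real.sqrt 5) = 0 := by
        nlinarith [h5]
      rcases mul_eq_zero.mp hfac2 with h' | h'
      · left; linarith
      · right; linarith
  · intro h
    have key : ∀ z : ℝ, ((z ^ 3 + 1) / 2) ^ 3 = 2 * z - 1 →
        2 * c (2 * z - 1) = z ^ 3 + 1 := by
      intro z hz
      have : c (2 * z - 1) = (z ^ 3 + 1) / 2 := by
        apply cube_inj'
        rw [hc, hz]
      rw [this]; ring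
    rcases h with h | h | h
    · apply key; rw [h]; norm_num
    · apply key; rw [h]
      linear_combination ((Real.sqrt 5 ^ 7 - 9 * Real.sqrt 5 ^ 6 + 41 * Real.sqrt 5 ^ 5 - 105 * Real.sqrt 5 ^ 4 + 187 * Real.sqrt 5 ^ 3 - 291 * Real.sqrt 5 ^ 2 + 731 * Real.sqrt 5 - 1707) / 4096) * h5
    · apply key; rw [h]
      linear_combination ((-Real.sqrt 5 ^ 7 - 9 * Real.sqrt 5 ^ 6 - 41 * Real.sqrt 5 ^ 5 - 105 * Real.sqrt 5 ^ 4 - 187 * Real.sqrt 5 ^ 3 - 291 * Real.sqrt 5 ^ 2 - 731 * Real.sqrt 5 - 1707) / 4096) * h5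
end

section
/- For every real number x with sin x ≠ 0 and cos x ≠ 0, the equation sin⁷x + 1/sin³x = cos⁷x + 1/cos³x holds if and only if sin x = cos x. -/
private lemma aux (p : ℝ) (h1 : -(1/2) ≤ p) (h2 : p ≤ 1/2) :
    p ^ 3 * (1 + p - 2 * p ^ 2 - p ^ 3) - (1 + p) < 0 := by
  have hp2' : p ^ 2 ≤ 1 / 4 := by nlinarith
  have hp4 : p ^ 4 ≤ 1 / 16 := by nlinarith [sq_nonneg p]
  have e1 : p ^ 2 * (1 / 2 - p) ≥ 0 := mul_nonneg (sq_nonneg p) (by linarith)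
  have e2 : (p ^ 2) ^ 2 * (1 / 2 + p) ≥ 0 := mul_nonneg (sq_nonneg _) (by linarith)
  nlinarith [e1, e2, sq_nonneg (p ^ 3), hp2', hp4]

theorem stmt_5 (x : ℝ) (hs : Real.sin x ≠ 0) (hc : Real.cos x ≠ 0) :
    Real.sin x ^ 7 + 1 / Real.sin x ^ 3 = Real.cos x ^ 7 + 1 / Real.cos x ^ 3 ↔
      Real.sin x = Real.cos x := by
  set s := Real.sin x with hsd
  set c := Real.cos x with hcd
  have hsc : s ^ 2 + c ^ 2 = 1 := Real.sin_sq_add_cos_sq x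
  have hp1 : s * c ≤ 1 / 2 := by nlinarith [sq_nonneg (s - c)]
  have hp2 : -(1 / 2) ≤ s * c := by nlinarith [sq_nonneg (s + c)]
  constructor
  · intro h
    have h' : s ^ 10 * c ^ 3 + c ^ 3 = c ^ 10 * s ^ 3 + s ^ 3 := by
      field_simp at h
      nlinarith [h, sq_nonneg s, sq_nonneg c]
    by_contra hne
    have hfac : (s - c) * ((s * c) ^ 3 * (1 + s * c - 2 * (s * c) ^ 2 - (s * c) ^ 3)
        - (1 + s * c)) = 0 := by
      linear_combination h' + (s - c + s^3*c^4 + s^3*c^6 + s^3*c^8 - s^4*c^3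
        - s^5*c^6 - s^6*c^3 + s^6*c^5 - s^8*c^3) * hsc
    have h2 : (s * c) ^ 3 * (1 + s * c - 2 * (s * c) ^ 2 - (s * c) ^ 3) - (1 + s * c) < 0 := by
      have := aux (s * c) hp2 hp1
      linarith
    have := mul_ne_zero (sub_ne_zero_of_ne hne) (ne_of_lt h2)
    exact this hfac
  · intro h
    rw [h]
end

section
/- Let ABC be an equilateral triangle in the Euclidean plane and let O be a point in the interior of the triangle (the interior of the convex hull of {A, B, C}). Set x = ∠BOC, y = ∠AOC, z = ∠AOB. Then there exists a triangle PQR with side lengths dist(Q,R) = dist(A,O), dist(P,R) = dist(B,O), dist(P,Q) = dist(C,O), whose angle at P equals x − π/3, whose angle at Q equals y − π/3, and whose angle at R equals z − π/3. -/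
set_option maxHeartbeats 4000000

open EuclideanGeometry Real
open scoped RealInnerProductSpace

private lemma aux_norm_eq {E : Type*} [NormedAddCommGroup E] [InnerProductSpace ℝ E]
    {v w : E} (h : ⟪v, v⟫ = ⟪w, w⟫) : ‖v‖ = ‖w‖ := by
  have h' : ‖v‖ ^ 2 = ‖w‖ ^ 2 := by
    rw [← real_inner_self_eq_norm_sq, ← real_inner_self_eq_norm_sq, h]
  calc ‖v‖ = Real.sqrt (‖v‖ ^ 2) := (Real.sqrt_sq (norm_nonneg v)).symm
    _ = Real.sqrt (‖w‖ ^ 2) := by rw [h']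
    _ = ‖w‖ := Real.sqrt_sq (norm_nonneg w)

private lemma aux_norm_pos {E : Type*} [NormedAddCommGroup E] [InnerProductSpace ℝ E]
    {v : E} (h : 0 < ⟪v, v⟫) : 0 < ‖v‖ := by
  rw [real_inner_self_eq_norm_sq] at h
  nlinarith [norm_nonneg v]

private lemma aux_angle_eq {p q r : EuclideanSpace ℝ (Fin 2)} {t : ℝ}
    (h0 : 0 ≤ t) (h1 : t ≤ π)
    (hq : ‖q - p‖ ≠ 0) (hr : ‖r - p‖ ≠ 0)
    (h : ⟪q - p, r - p⟫ = ‖q - p‖ * ‖r - p‖ * Real.cos t) :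
    ∠ q p r = t := by
  have hc : Real.cos (∠ q p r) = Real.cos t := by
    unfold EuclideanGeometry.angle
    rw [vsub_eq_sub, vsub_eq_sub, InnerProductGeometry.cos_angle, h]
    field_simp
  exact Real.injOn_cos
    (Set.mem_Icc.2 ⟨EuclideanGeometry.angle_nonneg q p r, EuclideanGeometry.angle_le_pi q p r⟩)
    (Set.mem_Icc.2 ⟨h0, h1⟩) hc

private lemma aux_angle_bound {E : Type*} [NormedAddCommGroup E] [InnerProductSpace ℝ E]
    {v w : E} {m : ℝ}
    (hv : 0 < ‖v‖) (hw : 0 < ‖w‖)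
    (hfac : ⟪v, v⟫ * ⟪w, w⟫ - ⟪v, w⟫ * ⟪v, w⟫ = 3 * m ^ 2)
    (hm : ⟪v, w⟫ < m) :
    π / 3 < InnerProductGeometry.angle v w := by
  have hbc : 0 < ‖v‖ * ‖w‖ := mul_pos hv hw
  have hprod : (‖v‖ * ‖w‖) ^ 2 = ⟪v, v⟫ * ⟪w, w⟫ := by
    rw [real_inner_self_eq_norm_sq, real_inner_self_eq_norm_sq]; ring
  have hlt : 2 * ⟪v, w⟫ < ‖v‖ * ‖w‖ := by
    rcases le_or_gt (⟪v, w⟫) 0 with h | h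
    · linarith
    · have h2 : (‖v‖ * ‖w‖) ^ 2 - (2 * ⟪v, w⟫) ^ 2
          = 3 * ((m - ⟪v, w⟫) * (m + ⟪v, w⟫)) := by
        rw [hprod]; linear_combination hfac
      have hsq : (2 * ⟪v, w⟫) ^ 2 < (‖v‖ * ‖w‖) ^ 2 := by
        nlinarith [mul_pos (show 0 < m - ⟪v, w⟫ by linarith)
          (show 0 < m + ⟪v, w⟫ by linarith)]
      exact lt_of_pow_lt_pow_left₀ 2 hbc.le hsq
  have hcos := InnerProductGeometry.cos_angle_mul_norm_mul_norm v w
  have hcoslt : Real.cos (InnerProductGeometry.angle v w) < 1 / 2 := by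
    by_contra hcon
    push_neg at hcon
    have h1 : (1 / 2 : ℝ) * (‖v‖ * ‖w‖) ≤
        Real.cos (InnerProductGeometry.angle v w) * (‖v‖ * ‖w‖) :=
      mul_le_mul_of_nonneg_right hcon hbc.le
    rw [hcos] at h1
    linarith
  by_contra hcon
  push_neg at hcon
  have h05 := Real.cos_le_cos_of_nonneg_of_le_pi
    (InnerProductGeometry.angle_nonneg v w) (by linarith [Real.pi_pos]) hcon
  rw [Real.cos_pi_div_three] at h05
  linarith

private lemma aux_poly {b g : ℝ} (hb : 0 < b) (hg : 0 < g) (ha : 0 < 1 - b - g) :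
    0 < b ^ 2 + g ^ 2 + b * g ∧ 0 < (1 - b) ^ 2 + g ^ 2 - (1 - b) * g ∧
      0 < b ^ 2 + (1 - g) ^ 2 - b * (1 - g) ∧ b ^ 2 + g ^ 2 + b * g - b - g < 0 := by
  refine ⟨by nlinarith [mul_pos hb hg], by nlinarith [sq_nonneg (1 - b - g / 2), mul_pos hg hg],
    by nlinarith [sq_nonneg (1 - g - b / 2), mul_pos hb hb],
    by nlinarith [mul_pos hb hg, mul_pos (add_pos hb hg) ha]⟩

theorem stmt_7 (A B C O : EuclideanSpace ℝ (Fin 2))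
    (heq1 : dist A B = dist B C) (heq2 : dist B C = dist C A)
    (hpos : 0 < dist A B)
    (hO : O ∈ interior (convexHull ℝ ({A, B, C} : Set (EuclideanSpace ℝ (Fin 2)))))
    (x y z : ℝ)
    (hx : x = ∠ B O C) (hy : y = ∠ A O C) (hz : z = ∠ A O B) :
    ∃ P Q R : EuclideanSpace ℝ (Fin 2),
      ¬ Collinear ℝ ({P, Q, R} : Set (EuclideanSpace ℝ (Fin 2))) ∧
      dist Q R = dist A O ∧ dist P R = dist B O ∧ dist P Q = dist C O ∧
      ∠ Q P R = x - π / 3 ∧ ∠ P Q R = y - π / 3 ∧ ∠ P R Q = z - π / 3 := by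
  classical
  have hABC : ¬Collinear ℝ ({A, B, C} : Set (EuclideanSpace ℝ (Fin 2))) := by
    intro hc
    have hBA : dist B C = dist A B := heq1.symm
    have hCA : dist C A = dist A B := by rw [← heq2, ← heq1]
    rcases hc.wbtw_or_wbtw_or_wbtw with h | h | h
    · have hd := h.dist_add_dist
      rw [dist_comm A C] at hd
      linarith [heq1, hCA]
    · have hd := h.dist_add_dist
      rw [dist_comm B A] at hd
      linarith [hBA, hCA]
    · have hd := h.dist_add_dist
      rw [dist_comm C B] at hd
      linarith [hBA, hCA]
  have hAI : AffineIndependent ℝ ![A, B, C] := affineIndependent_iff_not_collinear_set.2 hABC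
  have hcard : Fintype.card (Fin 3) = Module.finrank ℝ (EuclideanSpace ℝ (Fin 2)) + 1 := by
    simp [finrank_euclideanSpace_fin]
  have htop : affineSpan ℝ (Set.range ![A, B, C]) = ⊤ :=
    hAI.affineSpan_eq_top_iff_card_eq_finrank_add_one.2 hcard
  let bas : AffineBasis (Fin 3) ℝ (EuclideanSpace ℝ (Fin 2)) := ⟨![A, B, C], hAI, htop⟩
  have hrange : Set.range ⇑bas = ({A, B, C} : Set (EuclideanSpace ℝ (Fin 2))) := by
    show Set.range ![A, B, C] = _
    ext p
    simp [Matrix.range_cons, Matrix.range_empty]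
    tauto
  rw [← hrange, bas.interior_convexHull] at hO
  set β : ℝ := bas.coord 1 O with hβdef
  set γ : ℝ := bas.coord 2 O with hγdef
  have hβ : 0 < β := hO 1
  have hγ : 0 < γ := hO 2
  have hsum := bas.sum_coord_apply_eq_one O
  rw [Fin.sum_univ_three] at hsum
  have hα : 0 < 1 - β - γ := by
    have h0 := hO 0
    rw [← hβdef, ← hγdef] at hsum
    linarith
  have hrep : O = A + (β • (B - A) + γ • (C - A)) := by
    have h := bas.linear_combination_coord_eq_self O
    rw [Fin.sum_univ_three] at h
    have hb0 : bas 0 = A := rfl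
    have hb1 : bas 1 = B := rfl
    have hb2 : bas 2 = C := rfl
    rw [hb0, hb1, hb2] at h
    have hc0 : bas.coord 0 O = 1 - β - γ := by
      rw [hβdef, hγdef]; linarith
    rw [hc0, ← hβdef, ← hγdef] at h
    rw [← h]
    module
  -- Gram matrix facts
  have hu : ⟪B - A, B - A⟫ = dist A B ^ 2 := by
    rw [real_inner_self_eq_norm_sq, ← dist_eq_norm, dist_comm B A]
  have hv : ⟪C - A, C - A⟫ = dist A B ^ 2 := by
    rw [real_inner_self_eq_norm_sq, ← dist_eq_norm, ← heq2, ← heq1]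
  have huv : ⟪B - A, C - A⟫ = dist A B ^ 2 / 2 := by
    have hbc : ⟪(B - A) - (C - A), (B - A) - (C - A)⟫ = dist A B ^ 2 := by
      have he : (B - A) - (C - A) = B - C := by abel
      rw [he, real_inner_self_eq_norm_sq, ← dist_eq_norm, ← heq1]
    have h2 := real_inner_sub_sub_self (B - A) (C - A)
    rw [hu, hv, hbc] at h2
    linarith
  have hvu : ⟪C - A, B - A⟫ = dist A B ^ 2 / 2 := by rw [real_inner_comm]; exact huv
  have expand : ∀ p q p' q' : ℝ,
      ⟪p • (B - A) + q • (C - A), p' • (B - A) + q' • (C - A)⟫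
        = dist A B ^ 2 * (p * p' + q * q' + (p * q' + q * p') / 2) := by
    intro p q p' q'
    simp only [inner_add_left, inner_add_right, real_inner_smul_left, real_inner_smul_right,
      hu, hv, huv, hvu]
    ring
  -- the rotated point
  set O' : EuclideanSpace ℝ (Fin 2) := A + ((β + γ) • (B - A) + (1 - β) • (C - A)) with hO'def
  -- vector identities
  have hBO : B - O = (1 - β) • (B - A) + (-γ) • (C - A) := by rw [hrep]; module
  have hCO : C - O = (-β) • (B - A) + (1 - γ) • (C - A) := by rw [hrep]; module
  have hAO : A - O = (-β) • (B - A) + (-γ) • (C - A) := by rw [hrep]; module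
  have hRP : O' - O = γ • (B - A) + (1 - β - γ) • (C - A) := by rw [hrep, hO'def]; module
  have hRQ : O' - C = (β + γ) • (B - A) + (-β) • (C - A) := by rw [hO'def]; module
  have hPQ : O - C = β • (B - A) + (γ - 1) • (C - A) := by rw [hrep]; module
  have hPR : O - O' = (-γ) • (B - A) + (β + γ - 1) • (C - A) := by rw [hrep, hO'def]; module
  have hQR : C - O' = (-(β + γ)) • (B - A) + β • (C - A) := by rw [hO'def]; module
  -- inner product evaluations
  have eBC := expand (1 - β) (-γ) (-β) (1 - γ); rw [← hBO, ← hCO] at eBC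
  have eAC := expand (-β) (-γ) (-β) (1 - γ); rw [← hAO, ← hCO] at eAC
  have eAB := expand (-β) (-γ) (1 - β) (-γ); rw [← hAO, ← hBO] at eAB
  have eBB := expand (1 - β) (-γ) (1 - β) (-γ); rw [← hBO] at eBB
  have eCC := expand (-β) (1 - γ) (-β) (1 - γ); rw [← hCO] at eCC
  have eAA := expand (-β) (-γ) (-β) (-γ); rw [← hAO] at eAA
  have eQPRP := expand (-β) (1 - γ) γ (1 - β - γ); rw [← hCO, ← hRP] at eQPRP
  have ePQRQ := expand β (γ - 1) (β + γ) (-β); rw [← hPQ, ← hRQ] at ePQRQ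
  have ePRQR := expand (-γ) (β + γ - 1) (-(β + γ)) β; rw [← hPR, ← hQR] at ePRQR
  have eRPRP := expand γ (1 - β - γ) γ (1 - β - γ); rw [← hRP] at eRPRP
  have eRQRQ := expand (β + γ) (-β) (β + γ) (-β); rw [← hRQ] at eRQRQ
  have eQRQR := expand (-(β + γ)) β (-(β + γ)) β; rw [← hQR] at eQRQR
  -- positivity of norms
  have hs2 : 0 < dist A B ^ 2 := pow_pos hpos 2
  obtain ⟨pA, pB, pC, hKey⟩ := aux_poly hβ hγ hα
  have hnA : 0 < ‖A - O‖ := aux_norm_pos (by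
    rw [eAA]; exact (mul_pos hs2 pA).trans_eq (by ring))
  have hnB : 0 < ‖B - O‖ := aux_norm_pos (by
    rw [eBB]; exact (mul_pos hs2 pB).trans_eq (by ring))
  have hnC : 0 < ‖C - O‖ := aux_norm_pos (by
    rw [eCC]; exact (mul_pos hs2 pC).trans_eq (by ring))
  -- norm equalities
  have hnRP : ‖O' - O‖ = ‖B - O‖ := aux_norm_eq (by rw [eRPRP, eBB]; ring)
  have hnRQ : ‖O' - C‖ = ‖A - O‖ := aux_norm_eq (by rw [eRQRQ, eAA]; ring)
  have hnQR : ‖C - O'‖ = ‖A - O‖ := aux_norm_eq (by rw [eQRQR, eAA]; ring)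
  have hnPQ : ‖O - C‖ = ‖C - O‖ := norm_sub_rev O C
  have hnPR : ‖O - O'‖ = ‖B - O‖ := (norm_sub_rev O O').trans hnRP
  -- distances
  have hd1 : dist C O' = dist A O := by rw [dist_eq_norm, dist_eq_norm]; exact hnQR
  have hd2 : dist O O' = dist B O := by rw [dist_eq_norm, dist_eq_norm]; exact hnPR
  -- sqrt 3 facts
  have hq3 : Real.sqrt 3 ^ 2 = 3 := Real.sq_sqrt (by norm_num)
  have hq3nn : 0 ≤ Real.sqrt 3 := Real.sqrt_nonneg 3
  -- unfolded angles at O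
  have hangx : ∠ B O C = InnerProductGeometry.angle (B - O) (C - O) := rfl
  have hangy : ∠ A O C = InnerProductGeometry.angle (A - O) (C - O) := rfl
  have hangz : ∠ A O B = InnerProductGeometry.angle (A - O) (B - O) := rfl
  -- cos facts
  have hcosx := InnerProductGeometry.cos_angle_mul_norm_mul_norm (B - O) (C - O)
  have hcosy := InnerProductGeometry.cos_angle_mul_norm_mul_norm (A - O) (C - O)
  have hcosz := InnerProductGeometry.cos_angle_mul_norm_mul_norm (A - O) (B - O)
  rw [← hangx] at hcosx
  rw [← hangy] at hcosy
  rw [← hangz] at hcosz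
  -- sin facts
  have hsinx := InnerProductGeometry.sin_angle_mul_norm_mul_norm (B - O) (C - O)
  have hsiny := InnerProductGeometry.sin_angle_mul_norm_mul_norm (A - O) (C - O)
  have hsinz := InnerProductGeometry.sin_angle_mul_norm_mul_norm (A - O) (B - O)
  rw [← hangx] at hsinx
  rw [← hangy] at hsiny
  rw [← hangz] at hsinz
  have hvalx : ⟪B - O, B - O⟫ * ⟪C - O, C - O⟫ - ⟪B - O, C - O⟫ * ⟪B - O, C - O⟫
      = (Real.sqrt 3 * ((1 - β - γ) * dist A B ^ 2) / 2) ^ 2 := by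
    rw [eBB, eCC, eBC]
    linear_combination (-(((1 - β - γ) * dist A B ^ 2) ^ 2 / 4)) * hq3
  have hvaly : ⟪A - O, A - O⟫ * ⟪C - O, C - O⟫ - ⟪A - O, C - O⟫ * ⟪A - O, C - O⟫
      = (Real.sqrt 3 * (β * dist A B ^ 2) / 2) ^ 2 := by
    rw [eAA, eCC, eAC]
    linear_combination (-((β * dist A B ^ 2) ^ 2 / 4)) * hq3
  have hvalz : ⟪A - O, A - O⟫ * ⟪B - O, B - O⟫ - ⟪A - O, B - O⟫ * ⟪A - O, B - O⟫
      = (Real.sqrt 3 * (γ * dist A B ^ 2) / 2) ^ 2 := by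
    rw [eAA, eBB, eAB]
    linear_combination (-((γ * dist A B ^ 2) ^ 2 / 4)) * hq3
  rw [hvalx, Real.sqrt_sq (by
    apply div_nonneg _ (by norm_num)
    exact mul_nonneg hq3nn (mul_nonneg hα.le hs2.le))] at hsinx
  rw [hvaly, Real.sqrt_sq (by
    apply div_nonneg _ (by norm_num)
    exact mul_nonneg hq3nn (mul_nonneg hβ.le hs2.le))] at hsiny
  rw [hvalz, Real.sqrt_sq (by
    apply div_nonneg _ (by norm_num)
    exact mul_nonneg hq3nn (mul_nonneg hγ.le hs2.le))] at hsinz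
  -- the key polynomial inequality
  have hKs : 0 < dist A B ^ 2 * -(β ^ 2 + γ ^ 2 + β * γ - β - γ) :=
    mul_pos hs2 (by linarith)
  -- strict lower bounds for the angles at O
  have hx_gt : π / 3 < ∠ B O C := by
    rw [hangx]
    refine aux_angle_bound (m := (1 - β - γ) * dist A B ^ 2 / 2) hnB hnC ?_ ?_
    · rw [eBB, eCC, eBC]; linear_combination
    · rw [eBC]; linarith [hKs]
  have hy_gt : π / 3 < ∠ A O C := by
    rw [hangy]
    refine aux_angle_bound (m := β * dist A B ^ 2 / 2) hnA hnC ?_ ?_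
    · rw [eAA, eCC, eAC]; linear_combination
    · rw [eAC]; linarith [hKs]
  have hz_gt : π / 3 < ∠ A O B := by
    rw [hangz]
    refine aux_angle_bound (m := γ * dist A B ^ 2 / 2) hnA hnB ?_ ?_
    · rw [eAA, eBB, eAB]; linear_combination
    · rw [eAB]; linarith [hKs]
  have hx_le : ∠ B O C ≤ π := EuclideanGeometry.angle_le_pi B O C
  have hy_le : ∠ A O C ≤ π := EuclideanGeometry.angle_le_pi A O C
  have hz_le : ∠ A O B ≤ π := EuclideanGeometry.angle_le_pi A O B
  have hπ : 0 < π := Real.pi_pos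
  -- the three angle equalities
  have hangP : ∠ C O O' = ∠ B O C - π / 3 := by
    refine aux_angle_eq (by linarith) (by linarith) hnC.ne' (by rw [hnRP]; exact hnB.ne') ?_
    rw [hnRP, Real.cos_sub, Real.cos_pi_div_three, Real.sin_pi_div_three]
    linear_combination eQPRP - (1 / 2) * hcosx - (Real.sqrt 3 / 2) * hsinx
      - (1 / 2) * eBC - ((1 - β - γ) * dist A B ^ 2 / 4) * hq3
  have hangQ : ∠ O C O' = ∠ A O C - π / 3 := by
    refine aux_angle_eq (by linarith) (by linarith)
      (by rw [hnPQ]; exact hnC.ne') (by rw [hnRQ]; exact hnA.ne') ?_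
    rw [hnPQ, hnRQ, Real.cos_sub, Real.cos_pi_div_three, Real.sin_pi_div_three]
    linear_combination ePQRQ - (1 / 2) * hcosy - (Real.sqrt 3 / 2) * hsiny
      - (1 / 2) * eAC - (β * dist A B ^ 2 / 4) * hq3
  have hangR : ∠ O O' C = ∠ A O B - π / 3 := by
    refine aux_angle_eq (by linarith) (by linarith)
      (by rw [hnPR]; exact hnB.ne') (by rw [hnQR]; exact hnA.ne') ?_
    rw [hnPR, hnQR, Real.cos_sub, Real.cos_pi_div_three, Real.sin_pi_div_three]
    linear_combination ePRQR - (1 / 2) * hcosz - (Real.sqrt 3 / 2) * hsinz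
      - (1 / 2) * eAB - (γ * dist A B ^ 2 / 4) * hq3
  refine ⟨O, C, O', ?_, hd1, hd2, dist_comm O C, ?_, ?_, ?_⟩
  · intro hc
    rcases collinear_iff_eq_or_eq_or_angle_eq_zero_or_angle_eq_pi.1 hc with h | h | h | h
    · apply hnC.ne'
      rw [h, sub_self, norm_zero]
    · apply hnA.ne'
      rw [← hnRQ, h, sub_self, norm_zero]
    · rw [hangQ] at h; linarith
    · rw [hangQ] at h; linarith
  · rw [hx]; exact hangP
  · rw [hy]; exact hangQ
  · rw [hz]; exact hangR
end

section
/- Let A, B, C be non-collinear points in the Euclidean plane with dist(A,B) = dist(B,C). Then for every point D on the closed segment AC, the distance from D to the line through A and B plus the distance from D to the line through B and C equals the distance from A to the line through B and C. -/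
/-!
If `D = A + t • (C - A)`, the homothety with centre `A` fixes the line `AB` and the one with centre
`C` fixes `BC`, so `d(D, AB) = t * d(C, AB)` and `d(D, BC) = (1 - t) * d(A, BC)`. Twice the area of
the triangle is both `d(C, AB) * |AB|` and `d(A, BC) * |BC|`, so equal legs `|AB| = |BC|` force
equal heights `d(C, AB) = d(A, BC)`, and the two terms add up to `d(A, BC)`.
-/

open Metric EuclideanGeometry RealInnerProductSpace

section

variable {V : Type*} [NormedAddCommGroup V] [InnerProductSpace ℝ V]

lemma infDist_affineSpan_pair_eq_norm_sub_starProjection (X P Q : V) :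
    infDist X line[ℝ, P, Q] = ‖X - P - (ℝ ∙ (Q - P)).starProjection (X - P)‖ := by
  have hdir : line[ℝ, P, Q].direction = ℝ ∙ (Q - P) := by
    rw [direction_affineSpan, vectorSpan_pair_rev, vsub_eq_sub]
  have hproj : (orthogonalProjection line[ℝ, P, Q] X : V) =
      (ℝ ∙ (Q - P)).starProjection (X - P) + P := by
    rw [coe_orthogonalProjection_eq_iff_mem, hdir]
    constructor
    · refine AffineSubspace.vadd_mem_of_mem_direction ?_ (left_mem_affineSpan_pair ℝ P Q)
      rw [hdir]
      exact Submodule.starProjection_apply_mem _ _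
    · simpa [sub_add_eq_sub_sub_swap] using
        Submodule.sub_starProjection_mem_orthogonal (K := ℝ ∙ (Q - P)) (X - P)
  rw [← dist_orthogonalProjection_eq_infDist, hproj, dist_eq_norm, sub_add_eq_sub_sub_swap]

lemma norm_sub_starProjection_singleton_sq_mul (u v : V) :
    ‖u - (ℝ ∙ v).starProjection u‖ ^ 2 * ‖v‖ ^ 2 = ‖u‖ ^ 2 * ‖v‖ ^ 2 - ⟪u, v⟫ ^ 2 := by
  rcases eq_or_ne v 0 with rfl | hv
  · simp
  have hv2 : ‖v‖ ^ 2 ≠ 0 := by positivity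
  rw [Submodule.starProjection_singleton, RCLike.ofReal_real_eq_id, id, norm_sub_sq_real,
    real_inner_smul_right, norm_smul, Real.norm_eq_abs, mul_pow, sq_abs, real_inner_comm]
  field_simp
  ring

lemma infDist_affineSpan_pair_mul_dist_sq (X P Q : V) :
    (infDist X line[ℝ, P, Q] * dist P Q) ^ 2 =
      ‖X - P‖ ^ 2 * ‖Q - P‖ ^ 2 - ⟪X - P, Q - P⟫ ^ 2 := by
  rw [mul_pow, infDist_affineSpan_pair_eq_norm_sub_starProjection, dist_comm, dist_eq_norm,
    norm_sub_starProjection_singleton_sq_mul]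

-- Both sides are the square root of the Gram determinant of two sides of the triangle.
lemma infDist_affineSpan_pair_mul_dist_eq (A B C : V) :
    infDist C line[ℝ, A, B] * dist A B = infDist A line[ℝ, B, C] * dist B C := by
  refine (sq_eq_sq₀ (mul_nonneg infDist_nonneg dist_nonneg)
    (mul_nonneg infDist_nonneg dist_nonneg)).1 ?_
  rw [infDist_affineSpan_pair_mul_dist_sq, infDist_affineSpan_pair_mul_dist_sq,
    show C - A = (C - B) - (A - B) by abel, show B - A = -(A - B) by abel]
  generalize A - B = x, C - B = y
  rw [norm_neg, norm_sub_sq_real, inner_neg_right, inner_sub_left, real_inner_self_eq_norm_sq,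
    real_inner_comm x y]
  ring

lemma infDist_lineMap_affineSpan_pair (X P Q : V) (t : ℝ) :
    infDist (AffineMap.lineMap P X t) line[ℝ, P, Q] = |t| * infDist X line[ℝ, P, Q] := by
  rw [infDist_affineSpan_pair_eq_norm_sub_starProjection,
    infDist_affineSpan_pair_eq_norm_sub_starProjection, ← vsub_eq_sub (AffineMap.lineMap P X t),
    AffineMap.lineMap_vsub_left, vsub_eq_sub, map_smul, ← smul_sub, norm_smul, Real.norm_eq_abs]

end

theorem stmt_8 (A B C : EuclideanSpace ℝ (Fin 2))
    (h : ¬ Collinear ℝ ({A, B, C} : Set (EuclideanSpace ℝ (Fin 2))))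
    (hAB : dist A B = dist B C) :
    ∀ D ∈ segment ℝ A C,
      Metric.infDist D (affineSpan ℝ ({A, B} : Set (EuclideanSpace ℝ (Fin 2))) : Set (EuclideanSpace ℝ (Fin 2))) +
        Metric.infDist D (affineSpan ℝ ({B, C} : Set (EuclideanSpace ℝ (Fin 2))) : Set (EuclideanSpace ℝ (Fin 2))) =
      Metric.infDist A (affineSpan ℝ ({B, C} : Set (EuclideanSpace ℝ (Fin 2))) : Set (EuclideanSpace ℝ (Fin 2))) := by
  rw [segment_eq_image_lineMap]
  rintro _ ⟨t, ⟨ht₀, ht₁⟩, rfl⟩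
  have hne : A ≠ B := by
    rintro rfl
    exact h (by simpa using collinear_pair ℝ A C)
  have hheight : infDist C line[ℝ, A, B] = infDist A line[ℝ, B, C] :=
    mul_right_cancel₀ (dist_ne_zero.2 hne) (hAB ▸ infDist_affineSpan_pair_mul_dist_eq A B C)
  rw [infDist_lineMap_affineSpan_pair, ← AffineMap.lineMap_apply_one_sub, Set.pair_comm B C,
    infDist_lineMap_affineSpan_pair, abs_of_nonneg ht₀, abs_of_nonneg (sub_nonneg.2 ht₁),
    hheight, Set.pair_comm B C]
  ring
end

section
/- Let A, B, C, D be points in Euclidean three-space and let O be a point and r > 0 a real number. Suppose P, Q, R, T are points lying on the closed segments AB, BC, CD, DA respectively, each at distance exactly r from O, and suppose each of the four lines through the corresponding pair of vertices is tangent to the sphere of center O and radius r, i.e., every point of the line through A and B is at distance at least r from O, and similarly for the lines through B and C, through C and D, and through D and A. Then the four points P, Q, R, T are coplanar. -/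
/-!
The tangency point of each line is the orthogonal projection of `O` onto it, so by Pythagoras the
two tangent segments from a vertex have equal length; call these lengths `a, b, c, d` at
`A, B, C, D`. Then `P` is the barycentre of `A, B` with masses `1/a, 1/b`, and similarly for
`Q, R, T`, so the barycentre of all four vertices lies both on `PR` and on `QT`. Cleared of
denominators this is the affine dependence
`(a+b)cd • P + (c+d)ab • R = (b+c)ad • Q + (d+a)bc • T`.
When a tangent length vanishes, two of the four points coincide.
-/

open EuclideanGeometry

section Tangency

variable {V P : Type*} [NormedAddCommGroup V] [InnerProductSpace ℝ V] [MetricSpace P]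
  [NormedAddTorsor V P] {s t : AffineSubspace ℝ P} [s.direction.HasOrthogonalProjection]
  [t.direction.HasOrthogonalProjection] {O W X Y : P} {r : ℝ}

theorem orthogonalProjection_eq_of_forall_le_dist (hX : X ∈ s) (hXO : dist X O = r)
    (hs : ∀ Z ∈ s, r ≤ dist Z O) :
    haveI : Nonempty s := ⟨⟨X, hX⟩⟩
    orthogonalProjection s O = X := by
  have : Nonempty s := ⟨⟨X, hX⟩⟩
  refine (dist_orthogonalProjection_eq_dist_iff_eq_of_mem hX).1 (le_antisymm ?_ ?_)
  · rw [dist_orthogonalProjection_eq_infDist]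
    exact Metric.infDist_le_dist_of_mem hX
  · rw [dist_comm, hXO, dist_comm]
    exact hs _ (orthogonalProjection_mem O)

theorem dist_sq_eq_dist_sq_add_sq_of_tangent (hX : X ∈ s) (hXO : dist X O = r)
    (hs : ∀ Z ∈ s, r ≤ dist Z O) (hW : W ∈ s) :
    dist W O ^ 2 = dist W X ^ 2 + r ^ 2 := by
  have : Nonempty s := ⟨⟨X, hX⟩⟩
  have h := dist_sq_eq_dist_orthogonalProjection_sq_add_dist_orthogonalProjection_sq O hW
  rw [orthogonalProjection_eq_of_forall_le_dist hX hXO hs, dist_comm O, hXO] at h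
  simpa only [sq] using h

theorem dist_eq_dist_of_tangent (hX : X ∈ s) (hXO : dist X O = r) (hs : ∀ Z ∈ s, r ≤ dist Z O)
    (hY : Y ∈ t) (hYO : dist Y O = r) (ht : ∀ Z ∈ t, r ≤ dist Z O)
    (hWs : W ∈ s) (hWt : W ∈ t) : dist W X = dist W Y := by
  have h₁ := dist_sq_eq_dist_sq_add_sq_of_tangent hX hXO hs hWs
  have h₂ := dist_sq_eq_dist_sq_add_sq_of_tangent hY hYO ht hWt
  exact (sq_eq_sq₀ dist_nonneg dist_nonneg).1 (by linarith)

end Tangency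

theorem dist_smul_add_dist_smul_of_mem_segment {E : Type*} [NormedAddCommGroup E]
    [NormedSpace ℝ E] {A B P : E} (hP : P ∈ segment ℝ A B) :
    dist B P • A + dist A P • B = (dist A P + dist B P) • P := by
  rw [segment_eq_image_lineMap] at hP
  obtain ⟨t, ⟨ht₀, ht₁⟩, rfl⟩ := hP
  rw [dist_left_lineMap, dist_comm B, dist_lineMap_right, AffineMap.lineMap_apply_module,
    Real.norm_of_nonneg ht₀, Real.norm_of_nonneg (sub_nonneg.2 ht₁)]
  module

theorem coplanar_of_smul_add_smul_eq {k V : Type*} [Field k] [AddCommGroup V] [Module k V]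
    {P Q R T : V} {α β γ δ : k} (hα : α ≠ 0) (hsum : α + γ = β + δ)
    (h : α • P + γ • R = β • Q + δ • T) : Coplanar k ({P, Q, R, T} : Set V) := by
  have hP : P = (β / α) • (Q -ᵥ T) +ᵥ ((-γ / α) • (R -ᵥ T) +ᵥ T) := by
    rw [eq_sub_of_add_eq' hsum.symm] at h
    apply smul_right_injective V hα
    simp only [vsub_eq_sub, vadd_eq_add, smul_add, smul_smul, mul_div_cancel₀ _ hα]
    linear_combination (norm := module) h
  have hPmem : P ∈ affineSpan k {Q, R, T} := by
    rw [hP]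
    refine AffineSubspace.smul_vsub_vadd_mem _ _ (mem_affineSpan k (by simp))
      (mem_affineSpan k (by simp)) (AffineSubspace.smul_vsub_vadd_mem _ _ ?_ ?_ ?_) <;>
    exact mem_affineSpan k (by simp)
  rw [coplanar_insert_iff_of_mem_affineSpan hPmem]
  exact coplanar_triple k Q R T

theorem coplanar_of_dist_eq_of_mem_segment {E : Type*} [NormedAddCommGroup E] [NormedSpace ℝ E]
    {A B C D P Q R T : E} (hP : P ∈ segment ℝ A B) (hQ : Q ∈ segment ℝ B C)
    (hR : R ∈ segment ℝ C D) (hT : T ∈ segment ℝ D A)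
    (hA : dist A T = dist A P) (hB : dist B Q = dist B P) (hC : dist C R = dist C Q)
    (hD : dist D T = dist D R) : Coplanar ℝ ({P, Q, R, T} : Set E) := by
  have eP := dist_smul_add_dist_smul_of_mem_segment hP
  have eQ := dist_smul_add_dist_smul_of_mem_segment hQ
  have eR := dist_smul_add_dist_smul_of_mem_segment hR
  have eT := dist_smul_add_dist_smul_of_mem_segment hT
  rw [hB] at eQ
  rw [hC] at eR
  rw [hA, hD] at eT
  set a := dist A P
  set b := dist B P
  set c := dist C Q
  set d := dist D R
  by_cases hc : c = 0
  · have hQR : Q = R := by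
      rw [← dist_eq_zero.1 hc, dist_eq_zero.1 (hC.trans hc)]
    exact (coplanar_triple ℝ P R T).subset (by simp [hQR])
  by_cases hd : d = 0
  · have hRT : R = T := by
      rw [← dist_eq_zero.1 hd, dist_eq_zero.1 (hD.trans hd)]
    exact (coplanar_triple ℝ P Q T).subset (by simp [hRT])
  by_cases ha : a = 0
  · have hPT : P = T := by
      rw [← dist_eq_zero.1 ha, dist_eq_zero.1 (hA.trans ha)]
    exact (coplanar_triple ℝ Q R T).subset (by simp [hPT])

  refine coplanar_of_smul_add_smul_eq (α := (a + b) * (c * d)) (γ := (c + d) * (a * b))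
    (β := (b + c) * (a * d)) (δ := (d + a) * (b * c)) (by positivity) (by ring) ?_
  linear_combination (norm := module) (a * d) • eQ + (b * c) • eT - (c * d) • eP - (a * b) • eR

theorem stmt_9_general (A B C D O P Q R T : EuclideanSpace ℝ (Fin 3)) (r : ℝ)
    (hP : P ∈ segment ℝ A B) (hQ : Q ∈ segment ℝ B C)
    (hR : R ∈ segment ℝ C D) (hT : T ∈ segment ℝ D A)
    (hPd : dist P O = r) (hQd : dist Q O = r) (hRd : dist R O = r) (hTd : dist T O = r)
    (hAB : ∀ X ∈ affineSpan ℝ ({A, B} : Set (EuclideanSpace ℝ (Fin 3))), r ≤ dist X O)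
    (hBC : ∀ X ∈ affineSpan ℝ ({B, C} : Set (EuclideanSpace ℝ (Fin 3))), r ≤ dist X O)
    (hCD : ∀ X ∈ affineSpan ℝ ({C, D} : Set (EuclideanSpace ℝ (Fin 3))), r ≤ dist X O)
    (hDA : ∀ X ∈ affineSpan ℝ ({D, A} : Set (EuclideanSpace ℝ (Fin 3))), r ≤ dist X O) :
    Coplanar ℝ ({P, Q, R, T} : Set (EuclideanSpace ℝ (Fin 3))) := by
  have hPl := (mem_segment_iff_wbtw.1 hP).mem_affineSpan
  have hQl := (mem_segment_iff_wbtw.1 hQ).mem_affineSpan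
  have hRl := (mem_segment_iff_wbtw.1 hR).mem_affineSpan
  have hTl := (mem_segment_iff_wbtw.1 hT).mem_affineSpan
  refine coplanar_of_dist_eq_of_mem_segment hP hQ hR hT ?_ ?_ ?_ ?_
  · exact dist_eq_dist_of_tangent hTl hTd hDA hPl hPd hAB (right_mem_affineSpan_pair ..)
      (left_mem_affineSpan_pair ..)
  · exact dist_eq_dist_of_tangent hQl hQd hBC hPl hPd hAB (left_mem_affineSpan_pair ..)
      (right_mem_affineSpan_pair ..)
  · exact dist_eq_dist_of_tangent hRl hRd hCD hQl hQd hBC (left_mem_affineSpan_pair ..)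
      (right_mem_affineSpan_pair ..)
  · exact dist_eq_dist_of_tangent hTl hTd hDA hRl hRd hCD (left_mem_affineSpan_pair ..)
      (right_mem_affineSpan_pair ..)

theorem stmt_9 (A B C D O P Q R T : EuclideanSpace ℝ (Fin 3)) (r : ℝ) (hr : 0 < r)
    (hP : P ∈ segment ℝ A B) (hQ : Q ∈ segment ℝ B C)
    (hR : R ∈ segment ℝ C D) (hT : T ∈ segment ℝ D A)
    (hPd : dist P O = r) (hQd : dist Q O = r) (hRd : dist R O = r) (hTd : dist T O = r)
    (hAB : ∀ X ∈ affineSpan ℝ ({A, B} : Set (EuclideanSpace ℝ (Fin 3))), r ≤ dist X O)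
    (hBC : ∀ X ∈ affineSpan ℝ ({B, C} : Set (EuclideanSpace ℝ (Fin 3))), r ≤ dist X O)
    (hCD : ∀ X ∈ affineSpan ℝ ({C, D} : Set (EuclideanSpace ℝ (Fin 3))), r ≤ dist X O)
    (hDA : ∀ X ∈ affineSpan ℝ ({D, A} : Set (EuclideanSpace ℝ (Fin 3))), r ≤ dist X O) :
    Coplanar ℝ ({P, Q, R, T} : Set (EuclideanSpace ℝ (Fin 3))) :=
  stmt_9_general A B C D O P Q R T r hP hQ hR hT hPd hQd hRd hTd hAB hBC hCD hDA
end

section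
/- There exist six points in the Euclidean plane such that no three of them are collinear and the distance between any two of them is an integer. In particular, the six points (25,0), (−25,0), (7,24), (7,−24), (−7,24), (−7,−24) have this property. -/
/-!
The six points have integer coordinates on the circle `x² + y² = 25²` (as `7² + 24² = 25²`), so
all squared distances are integers, and a finite check shows they are perfect squares
(the distances are 14, 30, 40, 48 and 50). No three distinct points of a circle are collinear.
-/

namespace EuclideanGeometry

variable {V P : Type*} [NormedAddCommGroup V] [InnerProductSpace ℝ V] [MetricSpace P]
  [NormedAddTorsor V P]

theorem Cospherical.not_collinear_of_mem_of_ne {s : Set P} (hs : Cospherical s) {p₁ p₂ p₃ : P}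
    (h₁ : p₁ ∈ s) (h₂ : p₂ ∈ s) (h₃ : p₃ ∈ s) (h₁₂ : p₁ ≠ p₂) (h₁₃ : p₁ ≠ p₃) (h₂₃ : p₂ ≠ p₃) :
    ¬ Collinear ℝ ({p₁, p₂, p₃} : Set P) :=
  affineIndependent_iff_not_collinear_set.1 <|
    hs.affineIndependent_of_mem_of_ne h₁ h₂ h₃ h₁₂ h₁₃ h₂₃

end EuclideanGeometry

open EuclideanGeometry

def latticePoint (z : ℤ × ℤ) : EuclideanSpace ℝ (Fin 2) := !₂[z.1, z.2]

theorem latticePoint_injective : Function.Injective latticePoint := by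
  intro a b h
  have h0 := congrArg (· 0) h
  have h1 := congrArg (· 1) h
  simp only [latticePoint] at h0 h1
  norm_num at h0 h1
  exact Prod.ext h0 h1

theorem dist_latticePoint (a b : ℤ × ℤ) :
    dist (latticePoint a) (latticePoint b) =
      √(((a.1 - b.1) ^ 2 + (a.2 - b.2) ^ 2 : ℤ) : ℝ) := by
  simp [EuclideanSpace.dist_eq, latticePoint, Fin.sum_univ_two, Real.dist_eq, sq_abs]

theorem dist_latticePoint_of_eq_sq {a b : ℤ × ℤ} {r : ℕ}
    (h : (a.1 - b.1) ^ 2 + (a.2 - b.2) ^ 2 = (r : ℤ) ^ 2) :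
    dist (latticePoint a) (latticePoint b) = r := by
  rw [dist_latticePoint, h]
  push_cast
  exact Real.sqrt_sq r.cast_nonneg

theorem exists_nat_dist_latticePoint {a b : ℤ × ℤ}
    (h : IsSquare ((a.1 - b.1) ^ 2 + (a.2 - b.2) ^ 2)) :
    ∃ n : ℕ, dist (latticePoint a) (latticePoint b) = n := by
  obtain ⟨r, hr⟩ := h
  refine ⟨r.natAbs, dist_latticePoint_of_eq_sq ?_⟩
  rw [hr, Int.natCast_natAbs, sq_abs, sq]

def sixPoints : Fin 6 → ℤ × ℤ := ![(25, 0), (-25, 0), (7, 24), (7, -24), (-7, 24), (-7, -24)]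

theorem isSquare_sqDist_sixPoints : ∀ i j : Fin 6,
    IsSquare (((sixPoints i).1 - (sixPoints j).1) ^ 2 +
      ((sixPoints i).2 - (sixPoints j).2) ^ 2) := by
  decide +kernel

theorem dist_sixPoints_origin (i : Fin 6) :
    dist (latticePoint (sixPoints i)) (latticePoint 0) = 25 :=
  dist_latticePoint_of_eq_sq (by revert i; decide)

theorem sixPoints_injective : Function.Injective sixPoints := by decide

theorem stmt_13 :
    ∃ p : Fin 6 → EuclideanSpace ℝ (Fin 2),
      p 0 = !₂[25, 0] ∧ p 1 = !₂[-25, 0] ∧ p 2 = !₂[7, 24] ∧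
      p 3 = !₂[7, -24] ∧ p 4 = !₂[-7, 24] ∧ p 5 = !₂[-7, -24] ∧
      (∀ i j : Fin 6, ∃ n : ℕ, dist (p i) (p j) = n) ∧
      (∀ i j k : Fin 6, i ≠ j → j ≠ k → i ≠ k →
        ¬ Collinear ℝ ({p i, p j, p k} : Set (EuclideanSpace ℝ (Fin 2)))) := by
  have hinj : Function.Injective (latticePoint ∘ sixPoints) :=
    latticePoint_injective.comp sixPoints_injective
  have hcos : Cospherical (Set.range (latticePoint ∘ sixPoints)) :=
    ⟨latticePoint 0, 25, Set.forall_mem_range.2 dist_sixPoints_origin⟩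
  refine ⟨latticePoint ∘ sixPoints, ?_, ?_, ?_, ?_, ?_, ?_,
    fun i j ↦ exists_nat_dist_latticePoint (isSquare_sqDist_sixPoints i j),
    fun i j k hij hjk hik ↦ hcos.not_collinear_of_mem_of_ne ⟨i, rfl⟩ ⟨j, rfl⟩ ⟨k, rfl⟩
      (hinj.ne hij) (hinj.ne hik) (hinj.ne hjk)⟩ <;>
  simp [latticePoint, sixPoints]
end

section
/- There is no equilateral triangle with all three vertices at lattice points: there do not exist three distinct points a, b, c ∈ ℤ × ℤ whose three pairwise squared Euclidean distances (a₁−b₁)² + (a₂−b₂)², (b₁−c₁)² + (b₂−c₂)², (a₁−c₁)² + (a₂−c₂)² are all equal. -/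
/-!
Put `u = b - a`, `v = c - a`. If `|u|² = |v|² = |u - v|² = s`, then `2 ⟪u, v⟫ = s`, and Lagrange's
identity `⟪u, v⟫² + (u × v)² = |u|² |v|²` gives `3 s² = (2 (u × v))²`. For lattice points `s` and
`u × v` are integers and `s ≠ 0`, contradicting the irrationality of `√3`.
-/

theorem Int.eq_zero_of_mul_sq_eq_sq {d x y : ℤ} (hd : ¬IsSquare d) (h : d * x ^ 2 = y ^ 2) :
    x = 0 := by
  by_contra hx
  refine hd (Rat.isSquare_intCast_iff.mp ⟨y / x, ?_⟩)
  have hx' : (x : ℚ) ≠ 0 := mod_cast hx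
  field_simp
  exact_mod_cast h

section SqDist

variable {R : Type*} [CommRing R]

def sqDist (p q : R × R) : R := (p.1 - q.1) ^ 2 + (p.2 - q.2) ^ 2

theorem sqDist_eq_zero_iff [LinearOrder R] [IsStrictOrderedRing R] {p q : R × R} :
    sqDist p q = 0 ↔ p = q := by
  rw [sqDist, add_eq_zero_iff_of_nonneg (sq_nonneg _) (sq_nonneg _), sq_eq_zero_iff,
    sq_eq_zero_iff, sub_eq_zero, sub_eq_zero, Prod.ext_iff]

theorem three_mul_sq_eq_sq_of_sqDist_eq {a b c : R × R}
    (hab : sqDist a b = sqDist b c) (hbc : sqDist b c = sqDist a c) :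
    3 * sqDist a b ^ 2 =
      (2 * ((b.1 - a.1) * (c.2 - a.2) - (b.2 - a.2) * (c.1 - a.1))) ^ 2 := by
  unfold sqDist at *
  linear_combination (8 * ((a.1 - b.1) * (a.1 - c.1) + (a.2 - b.2) * (a.2 - c.2))) * hab +
    (3 * ((a.1 - b.1) ^ 2 + (a.2 - b.2) ^ 2) - 4 * ((a.1 - c.1) ^ 2 + (a.2 - c.2) ^ 2) +
      6 * ((a.1 - b.1) * (a.1 - c.1) + (a.2 - b.2) * (a.2 - c.2))) * hbc

end SqDist

theorem stmt_14 :
    ¬ ∃ a b c : ℤ × ℤ, a ≠ b ∧ b ≠ c ∧ a ≠ c ∧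
      (a.1 - b.1) ^ 2 + (a.2 - b.2) ^ 2 = (b.1 - c.1) ^ 2 + (b.2 - c.2) ^ 2 ∧
      (b.1 - c.1) ^ 2 + (b.2 - c.2) ^ 2 = (a.1 - c.1) ^ 2 + (a.2 - c.2) ^ 2 := by
  rintro ⟨a, b, c, hab, -, -, h₁, h₂⟩
  have hs : sqDist a b = 0 :=
    Int.eq_zero_of_mul_sq_eq_sq Int.prime_three.not_isSquare
      (three_mul_sq_eq_sq_of_sqDist_eq h₁ h₂)
  exact hab (sqDist_eq_zero_iff.mp hs)
end
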